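/- Let F be a field and let z_1, …, z_5 be five pairwise distinct elements of F. For 1 ≤ i ≤ 5 let r_i = r(z_1, …, ẑ_i, …, z_5) be the cross-ratio of the remaining four points (in their induced order); then each r_i lies in F and r_i ≠ 0, r_i ≠ 1. In the exterior square ⋀²_ℚ(F^* ⊗_ℤ ℚ) of the ℚ-vector space F^* ⊗_ℤ ℚ one has Σ_{i=1}^{5} (−1)^i (1 − r_i) ∧ r_i = 0, where x denotes the image of x ∈ F^* in F^* ⊗ ℚ. (This is the statement that the Bloch–Suslin map δ_2 : {z} ↦ (1−z) ∧ z kills Abel's five-term elements, so that B_2(F) → ⋀²F^* is well defined.) -/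
import Mathlib


open scoped TensorProduct

/-- The image of `x ∈ F^*` in the ℚ-vector space `F^* ⊗ ℚ` (realized as `ℚ ⊗[ℤ] F^*`). -/
noncomputable def unitsToQVec (F : Type*) [Field F] (x : Fˣ) : ℚ ⊗[ℤ] Additive Fˣ :=
  (1 : ℚ) ⊗ₜ[ℤ] Additive.ofMul x

/-- The cross-ratio `r(a,b,c,d) = ((a−c)(b−d))/((a−d)(b−c))`. -/
def crossRatio (F : Type*) [Field F] (a b c d : F) : F :=
  ((a - c) * (b - d)) / ((a - d) * (b - c))

section Aux

variable {F : Type*} [Field F]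

open Classical in
noncomputable def st6vv (x : F) : ℚ ⊗[ℤ] Additive Fˣ :=
  if h : x = 0 then 0 else unitsToQVec F (Units.mk0 x h)

lemma st6_unitsToQVec_mul (u w : Fˣ) :
    unitsToQVec F (u * w) = unitsToQVec F u + unitsToQVec F w := by
  unfold unitsToQVec
  rw [show Additive.ofMul (u * w) = Additive.ofMul u + Additive.ofMul w from rfl,
    TensorProduct.tmul_add]

lemma st6vv_coe (u : Fˣ) : unitsToQVec F u = st6vv (u : F) := by
  rw [st6vv, dif_neg u.ne_zero]
  congr 1
  exact Units.ext rfl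

lemma st6vv_one : st6vv (1 : F) = 0 := by
  rw [st6vv, dif_neg one_ne_zero]
  have : Units.mk0 (1 : F) one_ne_zero = 1 := Units.ext rfl
  rw [this]
  show (1 : ℚ) ⊗ₜ[ℤ] Additive.ofMul (1 : Fˣ) = 0
  rw [show Additive.ofMul (1 : Fˣ) = 0 from rfl, TensorProduct.tmul_zero]

lemma st6vv_mul {x y : F} (hx : x ≠ 0) (hy : y ≠ 0) :
    st6vv (x * y) = st6vv x + st6vv y := by
  rw [st6vv, st6vv, st6vv, dif_neg hx, dif_neg hy, dif_neg (mul_ne_zero hx hy)]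
  have : Units.mk0 (x * y) (mul_ne_zero hx hy) = Units.mk0 x hx * Units.mk0 y hy :=
    Units.ext rfl
  rw [this, st6_unitsToQVec_mul]

lemma st6vv_neg_one : st6vv (-1 : F) = 0 := by
  have h := st6vv_mul (neg_ne_zero.mpr (one_ne_zero : (1:F) ≠ 0))
    (neg_ne_zero.mpr (one_ne_zero : (1:F) ≠ 0))
  rw [neg_mul_neg, one_mul, st6vv_one] at h
  have h2 : (2 : ℚ) • st6vv (-1 : F) = 0 := by
    rw [two_smul]; exact h.symm
  calc st6vv (-1 : F) = ((1:ℚ)/2) • ((2:ℚ) • st6vv (-1 : F)) := by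
        rw [smul_smul]; norm_num
    _ = 0 := by rw [h2, smul_zero]

lemma st6vv_neg (x : F) : st6vv (-x) = st6vv x := by
  by_cases hx : x = 0
  · rw [hx, neg_zero]
  · rw [show -x = (-1) * x by ring, st6vv_mul (neg_ne_zero.mpr one_ne_zero) hx,
      st6vv_neg_one, zero_add]

lemma st6vv_inv {x : F} (hx : x ≠ 0) : st6vv x⁻¹ = -st6vv x := by
  have h := st6vv_mul hx (inv_ne_zero hx)
  rw [mul_inv_cancel₀ hx, st6vv_one] at h
  exact eq_neg_of_add_eq_zero_right h.symm

lemma st6vv_div {x y : F} (hx : x ≠ 0) (hy : y ≠ 0) :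
    st6vv (x / y) = st6vv x - st6vv y := by
  rw [div_eq_mul_inv, st6vv_mul hx (inv_ne_zero hy), st6vv_inv hy, sub_eq_add_neg]

lemma st6vv_crossRatio {a b c d : F} (hac : a - c ≠ 0) (hbd : b - d ≠ 0)
    (had : a - d ≠ 0) (hbc : b - c ≠ 0) :
    st6vv (crossRatio F a b c d)
      = st6vv (a - c) + st6vv (b - d) - st6vv (a - d) - st6vv (b - c) := by
  rw [crossRatio, st6vv_div (mul_ne_zero hac hbd) (mul_ne_zero had hbc),
    st6vv_mul hac hbd, st6vv_mul had hbc]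
  abel

lemma st6vv_one_sub_crossRatio {a b c d : F} (hab : a - b ≠ 0) (hcd : c - d ≠ 0)
    (had : a - d ≠ 0) (hbc : b - c ≠ 0) :
    st6vv (1 - crossRatio F a b c d)
      = st6vv (a - b) + st6vv (c - d) - st6vv (a - d) - st6vv (b - c) := by
  have key : (1 : F) - crossRatio F a b c d = ((d - c) * (a - b)) / ((a - d) * (b - c)) := by
    rw [crossRatio]
    field_simp
    ring
  have hdc : d - c ≠ 0 := fun h => hcd (by rw [show c - d = -(d - c) by ring, h, neg_zero])
  rw [key, st6vv_div (mul_ne_zero hdc hab) (mul_ne_zero had hbc),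
    st6vv_mul hdc hab, st6vv_mul had hbc,
    show d - c = -(c - d) by ring, st6vv_neg]
  abel

end Aux

section Key

open ExteriorAlgebra in
set_option maxHeartbeats 1000000 in
lemma st6key {V : Type*} [AddCommGroup V] [Module ℚ V]
    (x01 x02 x03 x04 x12 x13 x14 x23 x24 x34 : V) :
    (-1 : ℚ) ^ (0 + 1) • (ι ℚ (x12 + x34 - x14 - x23) * ι ℚ (x13 + x24 - x14 - x23))
      + (-1 : ℚ) ^ (1 + 1) • (ι ℚ (x02 + x34 - x04 - x23) * ι ℚ (x03 + x24 - x04 - x23))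
      + (-1 : ℚ) ^ (2 + 1) • (ι ℚ (x01 + x34 - x04 - x13) * ι ℚ (x03 + x14 - x04 - x13))
      + (-1 : ℚ) ^ (3 + 1) • (ι ℚ (x01 + x24 - x04 - x12) * ι ℚ (x02 + x14 - x04 - x12))
      + (-1 : ℚ) ^ (4 + 1) • (ι ℚ (x01 + x23 - x03 - x12) * ι ℚ (x02 + x13 - x03 - x12))
      = (0 : ExteriorAlgebra ℚ V) := by
  have sw : ∀ a b : V, ι ℚ a * ι ℚ b = -(ι ℚ b * ι ℚ a) := fun a b =>
    eq_neg_of_add_eq_zero_left (ExteriorAlgebra.ι_add_mul_swap a b)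
  have p0 : ((-1:ℚ)) ^ (0 + 1) = -1 := by norm_num
  have p1 : ((-1:ℚ)) ^ (1 + 1) = 1 := by norm_num
  have p2 : ((-1:ℚ)) ^ (2 + 1) = -1 := by norm_num
  have p3 : ((-1:ℚ)) ^ (3 + 1) = 1 := by norm_num
  have p4 : ((-1:ℚ)) ^ (4 + 1) = -1 := by norm_num
  rw [p0, p1, p2, p3, p4]
  simp only [map_add, map_sub, add_mul, sub_mul, mul_add, mul_sub, neg_smul, one_smul]
  rw [sw x03 x02, sw x04 x02, sw x04 x03, sw x12 x02, sw x12 x03, sw x12 x04, sw x13 x03, sw x13 x04, sw x14 x13, sw x23 x02, sw x23 x03, sw x23 x04, sw x23 x12, sw x23 x13, sw x23 x14, sw x24 x02, sw x24 x04, sw x24 x12, sw x24 x14, sw x34 x03, sw x34 x04, sw x34 x13, sw x34 x14, sw x34 x23, sw x34 x24]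
  simp only [ExteriorAlgebra.ι_sq_zero]
  abel

end Key

theorem statement_6 (F : Type*) [Field F] (z : Fin 5 → F) (hz : Function.Injective z) :
    (∀ i : Fin 5,
        crossRatio F (z (i.succAbove 0)) (z (i.succAbove 1))
            (z (i.succAbove 2)) (z (i.succAbove 3)) ≠ 0 ∧
        crossRatio F (z (i.succAbove 0)) (z (i.succAbove 1))
            (z (i.succAbove 2)) (z (i.succAbove 3)) ≠ 1) ∧
    (∀ r s : Fin 5 → Fˣ,
      (∀ i : Fin 5, (r i : F) = crossRatio F (z (i.succAbove 0)) (z (i.succAbove 1))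
          (z (i.succAbove 2)) (z (i.succAbove 3))) →
      (∀ i : Fin 5, (s i : F) = 1 - (r i : F)) →
      ∑ i : Fin 5, (-1 : ℚ) ^ ((i : ℕ) + 1) •
          (ExteriorAlgebra.ι ℚ (unitsToQVec F (s i)) *
            ExteriorAlgebra.ι ℚ (unitsToQVec F (r i)))
        = (0 : ExteriorAlgebra ℚ (ℚ ⊗[ℤ] Additive Fˣ))) := by
  have hd : ∀ (i : Fin 5) (j k : Fin 4), j ≠ k →
      z (i.succAbove j) - z (i.succAbove k) ≠ 0 := by
    intro i j k hjk
    refine sub_ne_zero.mpr (fun h => hjk ?_)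
    exact Fin.succAbove_right_injective (hz h)
  constructor
  · intro i
    constructor
    · exact div_ne_zero (mul_ne_zero (hd i 0 2 (by decide)) (hd i 1 3 (by decide)))
        (mul_ne_zero (hd i 0 3 (by decide)) (hd i 1 2 (by decide)))
    · intro h
      rw [crossRatio, div_eq_one_iff_eq
        (mul_ne_zero (hd i 0 3 (by decide)) (hd i 1 2 (by decide)))] at h
      have h0 : (z (i.succAbove 3) - z (i.succAbove 2)) *
          (z (i.succAbove 0) - z (i.succAbove 1)) = 0 := by linear_combination -h
      rcases mul_eq_zero.mp h0 with h' | h'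
      · exact hd i 3 2 (by decide) h'
      · exact hd i 0 1 (by decide) h'
  · intro r s hr hs
    have Hr : ∀ i : Fin 5, unitsToQVec F (r i) =
        st6vv (z (i.succAbove 0) - z (i.succAbove 2))
          + st6vv (z (i.succAbove 1) - z (i.succAbove 3))
          - st6vv (z (i.succAbove 0) - z (i.succAbove 3))
          - st6vv (z (i.succAbove 1) - z (i.succAbove 2)) := by
      intro i
      rw [st6vv_coe, hr i, st6vv_crossRatio (hd i 0 2 (by decide)) (hd i 1 3 (by decide))
        (hd i 0 3 (by decide)) (hd i 1 2 (by decide))]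
    have Hs : ∀ i : Fin 5, unitsToQVec F (s i) =
        st6vv (z (i.succAbove 0) - z (i.succAbove 1))
          + st6vv (z (i.succAbove 2) - z (i.succAbove 3))
          - st6vv (z (i.succAbove 0) - z (i.succAbove 3))
          - st6vv (z (i.succAbove 1) - z (i.succAbove 2)) := by
      intro i
      rw [st6vv_coe, hs i, hr i, st6vv_one_sub_crossRatio (hd i 0 1 (by decide))
        (hd i 2 3 (by decide)) (hd i 0 3 (by decide)) (hd i 1 2 (by decide))]
    have sA00 : (((0:Fin 5)).succAbove (0:Fin 4)) = (1:Fin 5) := by decide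
    have sA01 : (((0:Fin 5)).succAbove (1:Fin 4)) = (2:Fin 5) := by decide
    have sA02 : (((0:Fin 5)).succAbove (2:Fin 4)) = (3:Fin 5) := by decide
    have sA03 : (((0:Fin 5)).succAbove (3:Fin 4)) = (4:Fin 5) := by decide
    have sA10 : (((1:Fin 5)).succAbove (0:Fin 4)) = (0:Fin 5) := by decide
    have sA11 : (((1:Fin 5)).succAbove (1:Fin 4)) = (2:Fin 5) := by decide
    have sA12 : (((1:Fin 5)).succAbove (2:Fin 4)) = (3:Fin 5) := by decide
    have sA13 : (((1:Fin 5)).succAbove (3:Fin 4)) = (4:Fin 5) := by decide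
    have sA20 : (((2:Fin 5)).succAbove (0:Fin 4)) = (0:Fin 5) := by decide
    have sA21 : (((2:Fin 5)).succAbove (1:Fin 4)) = (1:Fin 5) := by decide
    have sA22 : (((2:Fin 5)).succAbove (2:Fin 4)) = (3:Fin 5) := by decide
    have sA23 : (((2:Fin 5)).succAbove (3:Fin 4)) = (4:Fin 5) := by decide
    have sA30 : (((3:Fin 5)).succAbove (0:Fin 4)) = (0:Fin 5) := by decide
    have sA31 : (((3:Fin 5)).succAbove (1:Fin 4)) = (1:Fin 5) := by decide
    have sA32 : (((3:Fin 5)).succAbove (2:Fin 4)) = (2:Fin 5) := by decide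
    have sA33 : (((3:Fin 5)).succAbove (3:Fin 4)) = (4:Fin 5) := by decide
    have sA40 : (((4:Fin 5)).succAbove (0:Fin 4)) = (0:Fin 5) := by decide
    have sA41 : (((4:Fin 5)).succAbove (1:Fin 4)) = (1:Fin 5) := by decide
    have sA42 : (((4:Fin 5)).succAbove (2:Fin 4)) = (2:Fin 5) := by decide
    have sA43 : (((4:Fin 5)).succAbove (3:Fin 4)) = (3:Fin 5) := by decide
    rw [Fin.sum_univ_five, Hs 0, Hr 0, Hs 1, Hr 1, Hs 2, Hr 2, Hs 3, Hr 3, Hs 4, Hr 4]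
    simp only [sA00, sA01, sA02, sA03, sA10, sA11, sA12, sA13, sA20, sA21, sA22, sA23,
      sA30, sA31, sA32, sA33, sA40, sA41, sA42, sA43]
    have v0 : (((0 : Fin 5) : ℕ)) = 0 := rfl
    have v1 : (((1 : Fin 5) : ℕ)) = 1 := rfl
    have v2 : (((2 : Fin 5) : ℕ)) = 2 := rfl
    have v3 : (((3 : Fin 5) : ℕ)) = 3 := rfl
    have v4 : (((4 : Fin 5) : ℕ)) = 4 := rfl
    rw [v0, v1, v2, v3, v4]
    exact st6key (st6vv (z 0 - z 1)) (st6vv (z 0 - z 2)) (st6vv (z 0 - z 3))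
      (st6vv (z 0 - z 4)) (st6vv (z 1 - z 2)) (st6vv (z 1 - z 3)) (st6vv (z 1 - z 4))
      (st6vv (z 2 - z 3)) (st6vv (z 2 - z 4)) (st6vv (z 3 - z 4))
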